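/- arXiv:1008.0305 — 2 statements merged into one kernel-verified Lean document; each statement's English description precedes it below -/
import Mathlib

section
/- Let (B, μ) be a commutative ring with a negative pseudovaluation, let d > 0, and equip B[T] with the pseudovaluation ν(Σ_i a_i T^i) = min_i { μ(a_i) − i·d }. If f ∈ B[T] is a monic polynomial of degree m which is regular with respect to T, then for every polynomial g ∈ B[T] one has ν(f·g) = ν(f) + ν(g). Consequently, every monic polynomial in B[T] is localizing with respect to ν (for every choice of d > 0). -/
/-! Let `j` be the largest index with `ν g = μ(g_j) - j d`. As `f` is monic of degree `m`, the
coefficient of `T^(m+j)` in `f g` is `g_j` plus the terms `f_i g_(m+j-i)`, `i < m`; regularity of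
`f` and maximality of `j` give each of these valuation `> μ(g_j)`, so this coefficient has
valuation at most `μ(g_j)` and `ν(f g) ≤ ν f + ν g`; the reverse inequality holds for all `f`.

A monic `h` is regular for every large weight `d'`, so `ν_{d'}(hⁿ x) ≤ ν_{d'}(x)`. Since `μ ≤ 0`,
`ν_d ≤ (d / d') ν_{d'}` for `d ≤ d'`, and `ν_{d'} ≤ ν_d`; hence `h` is localizing for `ν_d` with
`C = d / d'` and `D = 0`. -/

open scoped Classical

noncomputable section

/-- A pseudovaluation on a commutative ring `A`: a function `ν : A → ℝ ∪ {±∞}` with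
`ν 0 = ∞`, `ν 1 = 0`, `ν (a - b) ≥ min (ν a) (ν b)`, and `ν (a*b) ≥ ν a + ν b`
whenever `ν a ≠ -∞` and `ν b ≠ -∞`. -/
structure IsPseudovaluation {A : Type*} [CommRing A] (ν : A → EReal) : Prop where
  map_zero : ν 0 = ⊤
  map_one : ν 1 = 0
  min_le_sub : ∀ a b : A, min (ν a) (ν b) ≤ ν (a - b)
  add_le_mul : ∀ a b : A, ν a ≠ ⊥ → ν b ≠ ⊥ → ν a + ν b ≤ ν (a * b)

/-- A proper pseudovaluation never takes the value `-∞`. -/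
def IsProperPV {A : Type*} [CommRing A] (ν : A → EReal) : Prop :=
  IsPseudovaluation ν ∧ ∀ a : A, ν a ≠ ⊥

/-- A negative pseudovaluation is proper and satisfies `ν a ≤ 0` for `a ≠ 0`. -/
def IsNegativePV {A : Type*} [CommRing A] (ν : A → EReal) : Prop :=
  IsPseudovaluation ν ∧ (∀ a : A, ν a ≠ ⊥) ∧ ∀ a : A, a ≠ 0 → ν a ≤ 0

/-- `f` is localizing with respect to `ν` if there are `C > 0`, `D ≥ 0` with
`ν (fⁿ x) ≤ C · ν x + n D` for all `n` and `x`. -/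
def IsLocalizing {A : Type*} [CommRing A] (ν : A → EReal) (f : A) : Prop :=
  ∃ C D : ℝ, 0 < C ∧ 0 ≤ D ∧ ∀ (n : ℕ) (x : A),
    ν (f ^ n * x) ≤ (C : EReal) * ν x + (((n : ℝ) * D : ℝ) : EReal)

/-- Two functions `A → ℝ ∪ {±∞}` are linearly equivalent if they dominate each other
up to positive multiplicative and nonnegative additive constants. -/
def LinearlyEquivalent {A : Type*} (ν₁ ν₂ : A → EReal) : Prop :=
  ∃ c₁ c₂ d₁ d₂ : ℝ, 0 < c₁ ∧ 0 < c₂ ∧ 0 ≤ d₁ ∧ 0 ≤ d₂ ∧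
    (∀ a : A, (c₂ : EReal) * ν₂ a - (d₂ : EReal) ≤ ν₁ a) ∧
    (∀ a : A, (c₁ : EReal) * ν₁ a - (d₁ : EReal) ≤ ν₂ a)

/-- The weighted degree pseudovaluation on a multivariate polynomial ring:
`ν (Σ_k c_k T^k) = inf_k { μ(c_k) - Σ_i k_i d_i }`. -/
def weightedDegPV {R : Type*} [CommRing R] (μ : R → EReal) {m : ℕ} (d : Fin m → ℝ)
    (f : MvPolynomial (Fin m) R) : EReal :=
  ⨅ k : Fin m →₀ ℕ, (μ (MvPolynomial.coeff k f) - ((∑ i, (k i : ℝ) * d i : ℝ) : EReal))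

/-- A pseudovaluation `τ` on an `R`-algebra `B` is admissible (relative to `μ` on `R`)
if it is the quotient of a weighted degree pseudovaluation under some surjection
from a polynomial ring. -/
def IsAdmissiblePV {R B : Type*} [CommRing R] [CommRing B] [Algebra R B]
    (μ : R → EReal) (τ : B → EReal) : Prop :=
  ∃ (m : ℕ) (π : MvPolynomial (Fin m) R →ₐ[R] B) (d : Fin m → ℝ),
    Function.Surjective π ∧ (∀ i, 0 < d i) ∧
    ∀ b : B, τ b = ⨆ (f : MvPolynomial (Fin m) R) (_ : π f = b), weightedDegPV μ d f

/-- The pseudovaluation `μ (Σ_i a_i X^i) = min_i { ν(a_i) - i·d }` on `A[X]`. -/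
def polyPV {A : Type*} [CommRing A] (ν : A → EReal) (d : ℝ) (g : Polynomial A) : EReal :=
  ⨅ i : ℕ, (ν (g.coeff i) - (((i : ℝ) * d : ℝ) : EReal))

/-- The induced pseudovaluation on the localization `A_f`: the quotient of `polyPV ν d`
under the map `A[X] → A_f`, `X ↦ f⁻¹`. -/
def locPV {A : Type*} [CommRing A] (ν : A → EReal) (f : A) (d : ℝ)
    (z : Localization.Away f) : EReal :=
  ⨆ (g : Polynomial A)
    (_ : Polynomial.aeval (IsLocalization.Away.invSelf (S := Localization.Away f) f) g = z),
    polyPV ν d g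

/-- The Gauss norm `γ_ε(α) = inf_i { i + ε p^{-i} ν(a_i) }` of a Witt vector. -/
def gaussNorm (p : ℕ) {A : Type*} [CommRing A] (ν : A → EReal) (ε : ℝ)
    (α : WittVector p A) : EReal :=
  ⨅ i : ℕ, ((i : EReal) + ((ε * (p : ℝ) ^ (-(i : ℤ)) : ℝ) : EReal) * ν (α.coeff i))

/-- A Witt vector is overconvergent if `γ_ε(α) ≠ -∞` for some `ε > 0`. -/
def IsOverconvergent (p : ℕ) {A : Type*} [CommRing A] (ν : A → EReal)
    (α : WittVector p A) : Prop :=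
  ∃ ε : ℝ, 0 < ε ∧ gaussNorm p ν ε α ≠ ⊥

/-- The trivial valuation on an integral domain: `ν 0 = ∞` and `ν a = 0` for `a ≠ 0`. -/
def trivialPV (K : Type*) [Zero K] : K → EReal :=
  fun a => if a = 0 then (⊤ : EReal) else 0

open Polynomial Filter

namespace IsPseudovaluation

variable {A : Type*} [CommRing A] {ν : A → EReal}

theorem map_neg (hν : IsPseudovaluation ν) (a : A) : ν (-a) = ν a := by
  have le_map_neg : ∀ b : A, ν b ≤ ν (-b) := fun b => by
    simpa [hν.map_zero] using hν.min_le_sub 0 b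
  exact le_antisymm (by simpa using le_map_neg (-a)) (le_map_neg a)

theorem min_le_add (hν : IsPseudovaluation ν) (a b : A) : min (ν a) (ν b) ≤ ν (a + b) := by
  simpa [hν.map_neg] using hν.min_le_sub a (-b)

theorem inf_le_map_sum (hν : IsPseudovaluation ν) {ι : Type*} (s : Finset ι) (a : ι → A) :
    s.inf (fun i => ν (a i)) ≤ ν (∑ i ∈ s, a i) := by
  classical
  induction s using Finset.induction_on with
  | empty => simp [hν.map_zero]
  | insert i s hi ih =>
    rw [Finset.inf_insert, Finset.sum_insert hi]
    exact (inf_le_inf_left _ ih).trans (hν.min_le_add _ _)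

theorem map_le_of_map_sub_lt (hν : IsPseudovaluation ν) {a b : A} (h : ν (a - b) < ν b) :
    ν a ≤ ν (a - b) :=
  (min_le_iff.mp (hν.min_le_sub a b)).resolve_right h.not_ge

end IsPseudovaluation

theorem IsNegativePV.isProperPV {A : Type*} [CommRing A] {ν : A → EReal} (hν : IsNegativePV ν) :
    IsProperPV ν :=
  ⟨hν.1, hν.2.1⟩

theorem Polynomial.Monic.coeff_mul_natDegree_add {R : Type*} [CommRing R] {f : R[X]}
    (hf : f.Monic) (g : R[X]) (j : ℕ) :
    (f * g).coeff (f.natDegree + j) =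
      ∑ i ∈ Finset.range f.natDegree, f.coeff i * g.coeff (f.natDegree + j - i) + g.coeff j := by
  rw [coeff_mul, Finset.Nat.sum_antidiagonal_eq_sum_range_succ_mk,
    ← Finset.sum_subset (Finset.range_subset_range.mpr (by omega : f.natDegree + 1 ≤ _))
      fun i _ hi => by
        rw [coeff_eq_zero_of_natDegree_lt (by simpa using hi), zero_mul],
    Finset.sum_range_succ, hf.coeff_natDegree, one_mul, Nat.add_sub_cancel_left]

section polyPV

variable {B : Type*} [CommRing B] {μ : B → EReal} {d : ℝ}

def IsRegularWrtX (μ : B → EReal) (d : ℝ) (f : B[X]) : Prop :=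
  ∀ i < f.natDegree, ((-(f.natDegree * d) : ℝ) : EReal) < μ (f.coeff i) - ((i * d : ℝ) : EReal)

theorem le_polyPV_iff {c : EReal} {g : B[X]} :
    c ≤ polyPV μ d g ↔ ∀ i : ℕ, c + ((i * d : ℝ) : EReal) ≤ μ (g.coeff i) := by
  simp only [polyPV, le_iInf_iff]
  exact forall_congr' fun i =>
    EReal.le_sub_iff_add_le (.inl (EReal.coe_ne_bot _)) (.inl (EReal.coe_ne_top _))

theorem polyPV_le_of_coeff_le {g : B[X]} {c : ℝ} (i : ℕ)
    (h : μ (g.coeff i) ≤ ((c + i * d : ℝ) : EReal)) : polyPV μ d g ≤ c :=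
  (iInf_le _ i).trans (EReal.sub_le_of_le_add (by rwa [← EReal.coe_add]))

theorem polyPV_zero (hμ : IsPseudovaluation μ) : polyPV μ d (0 : B[X]) = ⊤ := by
  simp only [polyPV, coeff_zero, hμ.map_zero, EReal.top_sub_coe, iInf_const]

theorem exists_polyPV_eq (hμ : IsPseudovaluation μ) (g : B[X]) :
    ∃ i : ℕ, polyPV μ d g = μ (g.coeff i) - ((i * d : ℝ) : EReal) := by
  obtain ⟨j, -, hj⟩ := Finset.exists_mem_eq_inf' Finset.nonempty_range_add_one
    fun i : ℕ => μ (g.coeff i) - ((i * d : ℝ) : EReal)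
  refine ⟨j, le_antisymm (iInf_le _ j) (le_iInf fun i => ?_)⟩
  rcases le_or_gt i g.natDegree with hi | hi
  · exact hj ▸ Finset.inf'_le _ (Finset.mem_range_succ_iff.mpr hi)
  · rw [coeff_eq_zero_of_natDegree_lt hi, hμ.map_zero, EReal.top_sub_coe]
    exact le_top

theorem polyPV_ne_bot (hμ : IsProperPV μ) (g : B[X]) : polyPV μ d g ≠ ⊥ := by
  obtain ⟨i, hi⟩ := exists_polyPV_eq (d := d) hμ.1 g
  rw [hi, sub_eq_add_neg, ← EReal.coe_neg]
  exact EReal.add_ne_bot_iff.mpr ⟨hμ.2 _, EReal.coe_ne_bot _⟩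

theorem polyPV_ne_top (hμ : IsNegativePV μ) {g : B[X]} (hg : g ≠ 0) : polyPV μ d g ≠ ⊤ :=
  ne_top_of_le_ne_top (EReal.coe_ne_top (0 - g.natDegree * d)) <|
    polyPV_le_of_coeff_le g.natDegree <| by
      rw [sub_add_cancel, EReal.coe_zero]
      exact hμ.2.2 _ (leadingCoeff_ne_zero.mpr hg)

theorem exists_last_index_polyPV_eq (hμ : IsNegativePV μ) {g : B[X]} (hg : g ≠ 0) :
    ∃ (r : ℝ) (j : ℕ), polyPV μ d g = r ∧ μ (g.coeff j) = ((r + j * d : ℝ) : EReal) ∧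
      ∀ l, j < l → ((r + l * d : ℝ) : EReal) < μ (g.coeff l) := by
  obtain ⟨r, hr⟩ : ∃ r : ℝ, polyPV μ d g = r :=
    ⟨_, (EReal.coe_toReal (polyPV_ne_top hμ hg) (polyPV_ne_bot hμ.isProperPV g)).symm⟩
  have hle : ∀ i : ℕ, ((r + i * d : ℝ) : EReal) ≤ μ (g.coeff i) := fun i => by
    rw [EReal.coe_add]
    exact le_polyPV_iff.mp hr.ge i
  have le_natDegree : ∀ i, μ (g.coeff i) = ((r + i * d : ℝ) : EReal) → i ≤ g.natDegree :=
    fun i hi => not_lt.mp fun h => EReal.coe_ne_top _ <| by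
      rw [← hi, coeff_eq_zero_of_natDegree_lt h, hμ.1.map_zero]
  obtain ⟨i, hi⟩ := exists_polyPV_eq (d := d) hμ.1 g
  have hPi : μ (g.coeff i) = ((r + i * d : ℝ) : EReal) := by
    rw [← EReal.sub_add_cancel (a := μ (g.coeff i)) (b := i * d), ← hi, hr, EReal.coe_add]
  let IsMinimizer (i : ℕ) : Prop := μ (g.coeff i) = ((r + i * d : ℝ) : EReal)
  exact ⟨r, Nat.findGreatest IsMinimizer g.natDegree, hr,
    Nat.findGreatest_spec (P := IsMinimizer) (le_natDegree i hPi) hPi,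
    fun l hl => (hle l).lt_of_ne fun hPl =>
      Nat.findGreatest_is_greatest hl (le_natDegree l hPl.symm) hPl.symm⟩

theorem add_le_polyPV_mul (hμ : IsProperPV μ) (f g : B[X]) :
    polyPV μ d f + polyPV μ d g ≤ polyPV μ d (f * g) := by
  refine le_polyPV_iff.mpr fun k => ?_
  rw [coeff_mul]
  refine le_trans (Finset.le_inf fun x hx => ?_) (hμ.1.inf_le_map_sum _ _)
  have hk : ((k * d : ℝ) : EReal) = ((x.1 * d : ℝ) : EReal) + ((x.2 * d : ℝ) : EReal) := by
    rw [← EReal.coe_add, EReal.coe_eq_coe_iff, ← Finset.HasAntidiagonal.mem_antidiagonal.mp hx]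
    push_cast
    ring
  calc polyPV μ d f + polyPV μ d g + ((k * d : ℝ) : EReal)
      = (polyPV μ d f + ((x.1 * d : ℝ) : EReal)) + (polyPV μ d g + ((x.2 * d : ℝ) : EReal)) := by
        rw [hk, add_add_add_comm]
    _ ≤ μ (f.coeff x.1) + μ (g.coeff x.2) :=
        add_le_add (le_polyPV_iff.mp le_rfl x.1) (le_polyPV_iff.mp le_rfl x.2)
    _ ≤ μ (f.coeff x.1 * g.coeff x.2) := hμ.1.add_le_mul _ _ (hμ.2 _) (hμ.2 _)

theorem polyPV_of_isRegularWrtX (hμ : IsPseudovaluation μ) {f : B[X]} (hmonic : f.Monic)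
    (hf : IsRegularWrtX μ d f) : polyPV μ d f = ((-(f.natDegree * d) : ℝ) : EReal) := by
  refine le_antisymm (polyPV_le_of_coeff_le f.natDegree ?_) (le_polyPV_iff.mpr fun i => ?_)
  · rw [hmonic.coeff_natDegree, hμ.map_one, neg_add_cancel, EReal.coe_zero]
  · rcases lt_trichotomy i f.natDegree with hi | rfl | hi
    · exact (EReal.add_lt_of_lt_sub (hf i hi)).le
    · rw [hmonic.coeff_natDegree, hμ.map_one, ← EReal.coe_add, neg_add_cancel, EReal.coe_zero]
    · rw [coeff_eq_zero_of_natDegree_lt hi, hμ.map_zero]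
      exact le_top

theorem polyPV_mul_le_of_isRegularWrtX (hμ : IsNegativePV μ) {f : B[X]} (hmonic : f.Monic)
    (hf : IsRegularWrtX μ d f) (g : B[X]) :
    polyPV μ d (f * g) ≤ polyPV μ d f + polyPV μ d g := by
  rw [polyPV_of_isRegularWrtX hμ.1 hmonic hf]
  rcases eq_or_ne g 0 with rfl | hg
  · rw [polyPV_zero hμ.1, EReal.add_top_of_ne_bot (EReal.coe_ne_bot _)]
    exact le_top
  obtain ⟨r, j, hr, hj, hlast⟩ := exists_last_index_polyPV_eq hμ hg
  set m := f.natDegree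
  set s := ∑ i ∈ Finset.range m, f.coeff i * g.coeff (m + j - i)
  have hs : ((r + j * d : ℝ) : EReal) < μ s := by
    refine ((Finset.lt_inf_iff (EReal.coe_lt_top _)).mpr fun i hi => ?_).trans_le
      (hμ.1.inf_le_map_sum _ _)
    have him := Finset.mem_range.mp hi
    have hterm :=
      EReal.add_lt_add (EReal.add_lt_of_lt_sub (hf i him)) (hlast (m + j - i) (by omega))
    rw [← EReal.coe_add, ← EReal.coe_add,
      show -(m * d) + i * d + (r + ((m + j - i : ℕ) : ℝ) * d) = r + j * d by
        push_cast [Nat.cast_sub (by omega : i ≤ m + j)]; ring] at hterm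
    exact hterm.trans_le (hμ.1.add_le_mul _ _ (hμ.2.1 _) (hμ.2.1 _))
  have hsub : (f * g).coeff (m + j) - s = g.coeff j := by
    rw [hmonic.coeff_mul_natDegree_add, add_sub_cancel_left]
  have hc : μ ((f * g).coeff (m + j)) ≤ ((r + j * d : ℝ) : EReal) := by
    rw [← hj, ← hsub]
    exact hμ.1.map_le_of_map_sub_lt (by rwa [hsub, hj])
  calc polyPV μ d (f * g) ≤ ((r - m * d : ℝ) : EReal) :=
        polyPV_le_of_coeff_le (m + j) (hc.trans_eq (by congr 1; push_cast; ring))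
    _ = _ := by rw [hr, ← EReal.coe_add]; congr 1; ring

theorem polyPV_mul_of_isRegularWrtX (hμ : IsNegativePV μ) {f : B[X]} (hmonic : f.Monic)
    (hf : IsRegularWrtX μ d f) (g : B[X]) :
    polyPV μ d (f * g) = polyPV μ d f + polyPV μ d g :=
  le_antisymm (polyPV_mul_le_of_isRegularWrtX hμ hmonic hf g) (add_le_polyPV_mul hμ.isProperPV f g)

theorem polyPV_pow_mul_le_of_isRegularWrtX (hμ : IsNegativePV μ) (hd : 0 ≤ d) {f : B[X]}
    (hmonic : f.Monic) (hf : IsRegularWrtX μ d f) (n : ℕ) (x : B[X]) :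
    polyPV μ d (f ^ n * x) ≤ polyPV μ d x := by
  induction n with
  | zero => rw [pow_zero, one_mul]
  | succ n ih =>
    rw [pow_succ', mul_assoc, polyPV_mul_of_isRegularWrtX hμ hmonic hf,
      polyPV_of_isRegularWrtX hμ.1 hmonic hf]
    refine (add_le_of_nonpos_left ?_).trans ih
    exact EReal.coe_nonpos.mpr (neg_nonpos.mpr (mul_nonneg (Nat.cast_nonneg _) hd))

theorem polyPV_antitone (g : B[X]) : Antitone fun d => polyPV μ d g := fun _ _ h =>
  iInf_mono fun i => EReal.sub_le_sub le_rfl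
    (EReal.coe_le_coe_iff.mpr (mul_le_mul_of_nonneg_left h (Nat.cast_nonneg i)))

theorem polyPV_le_mul_polyPV (hμ : IsNegativePV μ) {d₁ d₂ : ℝ} (hd₁ : 0 < d₁) (h : d₁ ≤ d₂)
    (g : B[X]) : polyPV μ d₁ g ≤ ((d₁ / d₂ : ℝ) : EReal) * polyPV μ d₂ g := by
  have hd₂ := hd₁.trans_le h
  rcases eq_or_ne g 0 with rfl | hg
  · rw [polyPV_zero hμ.1, polyPV_zero hμ.1, EReal.coe_mul_top_of_pos (div_pos hd₁ hd₂)]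
  obtain ⟨r, j, hr, hj, -⟩ := exists_last_index_polyPV_eq (d := d₂) hμ hg
  have hnonpos : r + j * d₂ ≤ 0 := by
    have hcj : g.coeff j ≠ 0 := fun h0 => by
      rw [h0, hμ.1.map_zero] at hj
      exact EReal.coe_ne_top _ hj.symm
    exact EReal.coe_nonpos.mp (hj ▸ hμ.2.2 _ hcj)
  rw [hr, ← EReal.coe_mul]
  refine polyPV_le_of_coeff_le j (hj.trans_le (EReal.coe_le_coe_iff.mpr ?_))
  have hdiff : d₁ / d₂ * r + j * d₁ - (r + j * d₂) = (d₂ - d₁) / d₂ * -(r + j * d₂) := by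
    field_simp
    ring
  linarith [mul_nonneg (div_nonneg (sub_nonneg.2 h) hd₂.le) (neg_nonneg.2 hnonpos)]

theorem eventually_isRegularWrtX (hμ : IsProperPV μ) (f : B[X]) :
    ∀ᶠ d in atTop, IsRegularWrtX μ d f := by
  have : ∀ᶠ d in atTop, ∀ i ∈ Finset.range f.natDegree,
      ((-(f.natDegree * d) : ℝ) : EReal) < μ (f.coeff i) - ((i * d : ℝ) : EReal) := by
    refine (eventually_all_finset _).mpr fun i hi => ?_
    obtain ⟨c, -, hc⟩ := EReal.lt_iff_exists_real_btwn.mp (bot_lt_iff_ne_bot.mpr (hμ.2 (f.coeff i)))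
    filter_upwards [eventually_ge_atTop (max 0 (-c))] with d hd
    rw [EReal.lt_sub_iff_add_lt (.inl (EReal.coe_ne_bot _)) (.inl (EReal.coe_ne_top _)),
      ← EReal.coe_add]
    refine lt_of_le_of_lt (EReal.coe_le_coe_iff.mpr ?_) hc
    have hin : (i : ℝ) + 1 ≤ f.natDegree := by exact_mod_cast Finset.mem_range.mp hi
    nlinarith [le_max_left 0 (-c), le_max_right 0 (-c)]
  exact this.mono fun d hd i hi => hd i (Finset.mem_range.mpr hi)

theorem isLocalizing_polyPV_of_monic (hμ : IsNegativePV μ) (hd : 0 < d) {h : B[X]}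
    (hmonic : h.Monic) : IsLocalizing (polyPV μ d) h := by
  obtain ⟨d', hdd', hreg⟩ :=
    ((eventually_ge_atTop d).and (eventually_isRegularWrtX hμ.isProperPV h)).exists
  have hC : 0 < d / d' := div_pos hd (hd.trans_le hdd')
  refine ⟨d / d', 0, hC, le_rfl, fun n x => ?_⟩
  have hC' : (0 : EReal) ≤ ((d / d' : ℝ) : EReal) := EReal.coe_nonneg.mpr hC.le
  calc polyPV μ d (h ^ n * x)
      ≤ ((d / d' : ℝ) : EReal) * polyPV μ d' (h ^ n * x) := polyPV_le_mul_polyPV hμ hd hdd' _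
    _ ≤ ((d / d' : ℝ) : EReal) * polyPV μ d' x := mul_le_mul_of_nonneg_left
        (polyPV_pow_mul_le_of_isRegularWrtX hμ (hd.le.trans hdd') hmonic hreg n x) hC'
    _ ≤ ((d / d' : ℝ) : EReal) * polyPV μ d x :=
        mul_le_mul_of_nonneg_left (polyPV_antitone x hdd') hC'
    _ = _ := by simp

end polyPV

theorem statement5_general (B : Type*) [CommRing B]
    (μ : B → EReal) (hμ : IsNegativePV μ)
    (d : ℝ)
    (m : ℕ) (f : Polynomial B) (hmonic : f.Monic) (hdeg : f.natDegree = m)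
    (hreg : ∀ i < m, ((-(( m : ℝ) * d) : ℝ) : EReal)
      < μ (f.coeff i) - (((i : ℝ) * d : ℝ) : EReal)) :
    (∀ g : Polynomial B, polyPV μ d (f * g) = polyPV μ d f + polyPV μ d g) ∧
    (∀ h : Polynomial B, h.Monic → ∀ d' : ℝ, 0 < d' → IsLocalizing (polyPV μ d') h) := by
  subst hdeg
  exact ⟨polyPV_mul_of_isRegularWrtX hμ hmonic hreg,
    fun h hh d' hd' => isLocalizing_polyPV_of_monic hμ hd' hh⟩

/-- If `f ∈ B[T]` is monic of degree `m` and regular with respect to `T`,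
then `ν (f g) = ν f + ν g` for every `g`, where `ν = polyPV μ d`. Consequently every
monic polynomial in `B[T]` is localizing (for every choice of `d > 0`). -/
theorem statement5 (B : Type*) [CommRing B]
    (μ : B → EReal) (hμ : IsNegativePV μ)
    (d : ℝ) (hd : 0 < d)
    (m : ℕ) (f : Polynomial B) (hmonic : f.Monic) (hdeg : f.natDegree = m)
    (hreg : ∀ i < m, ((-(( m : ℝ) * d) : ℝ) : EReal)
      < μ (f.coeff i) - (((i : ℝ) * d : ℝ) : EReal)) :
    (∀ g : Polynomial B, polyPV μ d (f * g) = polyPV μ d f + polyPV μ d g) ∧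
    (∀ h : Polynomial B, h.Monic → ∀ d' : ℝ, 0 < d' → IsLocalizing (polyPV μ d') h) :=
  statement5_general B μ hμ d m f hmonic hdeg hreg
end
end

section
/- Let (B, μ) be an integral domain with a negative pseudovaluation such that every nonzero element of B is localizing with respect to μ. Let d > 0 and equip the polynomial ring B[T] with the pseudovaluation ν(Σ_i a_i T^i) = min_i { μ(a_i) − i·d }. Then every nonzero element of B[T] is localizing with respect to ν. -/
open scoped Classical

noncomputable section

/-!
Let `b` be the leading coefficient of `g` and `e` its degree. The coefficient of `g x` in degree
`e + j` expresses `b x_j` through that coefficient and the higher coefficients of `x`; iterating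
this long division bounds `μ(b^(n+k) x_j)`, for `x` of degree `k + j`, from below by `ν_w(gⁿ x)`
up to a term linear in `k`. As `b` is localizing in `B`, this bounds `ν_w(gⁿ x)` from above.
If `j` realises `ν_w(x)`, then `ν_w(x) ≤ μ(x_(k+j)) - (k+j) w` gives `k w ≤ -μ(x_j)`, so for a
large weight `w` the error linear in `k` is absorbed and `g` is localizing for `ν_w`. Finally
`ν_w ≤ ν_d ≤ (d / w) ν_w` for `d ≤ w`, which carries the property from `ν_w` over to `ν_d`.
-/

open Polynomial Filter Finset

namespace IsPseudovaluation

variable {A : Type*} [CommRing A] {μ : A → EReal}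

theorem le_map_neg (hμ : IsPseudovaluation μ) (a : A) : μ a ≤ μ (-a) := by
  simpa [hμ.map_zero] using hμ.min_le_sub 0 a

theorem le_map_sub (hμ : IsPseudovaluation μ) {T : EReal} {a b : A} (ha : T ≤ μ a)
    (hb : T ≤ μ b) : T ≤ μ (a - b) :=
  (le_min ha hb).trans (hμ.min_le_sub a b)

theorem le_map_add (hμ : IsPseudovaluation μ) {T : EReal} {a b : A} (ha : T ≤ μ a)
    (hb : T ≤ μ b) : T ≤ μ (a + b) := by
  simpa using hμ.le_map_sub ha (hb.trans (hμ.le_map_neg b))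

theorem le_map_sum (hμ : IsPseudovaluation μ) {ι : Type*} {T : EReal} (s : Finset ι)
    (f : ι → A) (h : ∀ i ∈ s, T ≤ μ (f i)) : T ≤ μ (∑ i ∈ s, f i) :=
  Finset.sum_induction f (fun a => T ≤ μ a) (fun _ _ => hμ.le_map_add)
    (by simp [hμ.map_zero]) h

theorem coe_le_map_mul (hμ : IsPseudovaluation μ) {r s t : ℝ} {a b : A}
    (ha : (r : EReal) ≤ μ a) (hb : (s : EReal) ≤ μ b) (ht : t ≤ r + s) :
    (t : EReal) ≤ μ (a * b) :=
  calc (t : EReal) ≤ ((r + s : ℝ) : EReal) := EReal.coe_le_coe_iff.2 ht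
    _ = r + s := EReal.coe_add r s
    _ ≤ μ a + μ b := add_le_add ha hb
    _ ≤ μ (a * b) := hμ.add_le_mul a b (ne_bot_of_le_ne_bot (EReal.coe_ne_bot r) ha)
        (ne_bot_of_le_ne_bot (EReal.coe_ne_bot s) hb)

theorem coe_le_map_pow (hμ : IsPseudovaluation μ) {r : ℝ} {a : A} (ha : (r : EReal) ≤ μ a)
    (n : ℕ) : ((n * r : ℝ) : EReal) ≤ μ (a ^ n) := by
  induction n with
  | zero => simp [hμ.map_one]
  | succ n ih =>
    rw [pow_succ]
    exact hμ.coe_le_map_mul ih ha (by push_cast; linarith)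

end IsPseudovaluation

theorem IsNegativePV.exists_eq_coe_nonpos {A : Type*} [CommRing A] {μ : A → EReal}
    (hμ : IsNegativePV μ) {a : A} (ha : a ≠ 0) : ∃ r : ℝ, r ≤ 0 ∧ μ a = r :=
  ⟨(μ a).toReal, EReal.toReal_nonpos (hμ.2.2 a ha),
    (EReal.coe_toReal (ne_top_of_le_ne_top EReal.zero_ne_top (hμ.2.2 a ha)) (hμ.2.1 a)).symm⟩

theorem IsProperPV.exists_coe_le_map_coeff {A : Type*} [CommRing A] {μ : A → EReal}
    (hμ : IsProperPV μ) (g : A[X]) : ∃ M : ℝ, ∀ i, (M : EReal) ≤ μ (g.coeff i) := by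
  obtain ⟨M, hM⟩ := (g.support.image fun i => (μ (g.coeff i)).toReal).bddBelow
  refine ⟨M, fun i => ?_⟩
  by_cases hi : i ∈ g.support
  · calc (M : EReal) ≤ (μ (g.coeff i)).toReal :=
          EReal.coe_le_coe_iff.2 (hM (mem_coe.2 (mem_image_of_mem _ hi)))
      _ ≤ μ (g.coeff i) := EReal.coe_toReal_le (hμ.2 _)
  · simp [notMem_support_iff.1 hi, hμ.1.map_zero]

theorem IsLocalizing.of_le_of_le_mul {A : Type*} [CommRing A] {ν₁ ν₂ : A → EReal} {f : A}
    {c : ℝ} (hc : 0 < c) (h₁ : ∀ a, ν₂ a ≤ ν₁ a) (h₂ : ∀ a, ν₁ a ≤ c * ν₂ a)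
    (hf : IsLocalizing ν₂ f) : IsLocalizing ν₁ f := by
  obtain ⟨C, D, hC, hD, hf⟩ := hf
  have hc' : (0 : EReal) ≤ c := EReal.coe_nonneg.2 hc.le
  refine ⟨c * C, c * D, mul_pos hc hC, mul_nonneg hc.le hD, fun n x => ?_⟩
  calc ν₁ (f ^ n * x) ≤ c * ν₂ (f ^ n * x) := h₂ _
    _ ≤ c * (C * ν₂ x + ((n * D : ℝ) : EReal)) := mul_le_mul_of_nonneg_left (hf n x) hc'
    _ = ((c * C : ℝ) : EReal) * ν₂ x + ((n * (c * D) : ℝ) : EReal) := by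
      rw [EReal.left_distrib_of_nonneg_of_ne_top hc' (EReal.coe_ne_top c), ← mul_assoc,
        ← EReal.coe_mul, ← EReal.coe_mul, mul_left_comm]
    _ ≤ ((c * C : ℝ) : EReal) * ν₁ x + ((n * (c * D) : ℝ) : EReal) := by
      gcongr
      exact h₁ x

section polyPV

variable {A : Type*} [CommRing A] {μ : A → EReal}

theorem polyPV_le (μ : A → EReal) (w : ℝ) (x : A[X]) (i : ℕ) :
    polyPV μ w x ≤ μ (x.coeff i) - ((i * w : ℝ) : EReal) :=
  iInf_le _ i

theorem coe_le_polyPV_iff {V w : ℝ} {x : A[X]} :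
    (V : EReal) ≤ polyPV μ w x ↔ ∀ i : ℕ, ((V + i * w : ℝ) : EReal) ≤ μ (x.coeff i) := by
  refine le_iInf_iff.trans (forall_congr' fun i => ?_)
  rw [EReal.le_sub_iff_add_le (.inl (EReal.coe_ne_bot _)) (.inl (EReal.coe_ne_top _)),
    EReal.coe_add]

theorem polyPV_zero_s9 (h0 : μ 0 = ⊤) (w : ℝ) : polyPV μ w 0 = ⊤ := by
  simp only [polyPV, coeff_zero, h0, EReal.top_sub_coe, iInf_const]

theorem exists_polyPV_eq_s9 (h0 : μ 0 = ⊤) (w : ℝ) {x : A[X]} (hx : x ≠ 0) :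
    ∃ j ∈ x.support, polyPV μ w x = μ (x.coeff j) - ((j * w : ℝ) : EReal) := by
  obtain ⟨j, hj, hmin⟩ := x.support.exists_min_image
    (fun i => μ (x.coeff i) - ((i * w : ℝ) : EReal)) (nonempty_support_iff.2 hx)
  refine ⟨j, hj, le_antisymm (polyPV_le μ w x j) (le_iInf fun i => ?_)⟩
  by_cases hi : i ∈ x.support
  · exact hmin i hi
  · rw [notMem_support_iff.1 hi, h0, EReal.top_sub_coe]
    exact le_top

theorem exists_polyPV_eq_coe (hμ : IsNegativePV μ) (w : ℝ) {x : A[X]} (hx : x ≠ 0) :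
    ∃ j ∈ x.support, ∃ ρ : ℝ, ρ ≤ 0 ∧ μ (x.coeff j) = ρ ∧
      polyPV μ w x = ((ρ - j * w : ℝ) : EReal) := by
  obtain ⟨j, hj, hνx⟩ := exists_polyPV_eq_s9 hμ.1.map_zero w hx
  obtain ⟨ρ, hρ, hμj⟩ := hμ.exists_eq_coe_nonpos (mem_support_iff.1 hj)
  exact ⟨j, hj, ρ, hρ, hμj, by rw [hνx, hμj, EReal.coe_sub]⟩

theorem polyPV_le_neg_natDegree_mul (hμ : IsNegativePV μ) (w : ℝ) {x : A[X]} (hx : x ≠ 0) :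
    polyPV μ w x ≤ ((-(x.natDegree * w) : ℝ) : EReal) := by
  refine (polyPV_le μ w x x.natDegree).trans ?_
  rw [EReal.coe_neg, ← zero_sub]
  exact EReal.sub_le_sub (hμ.2.2 _ (mt leadingCoeff_eq_zero.1 hx)) le_rfl

theorem polyPV_le_polyPV_of_le {d w : ℝ} (hdw : d ≤ w) (x : A[X]) :
    polyPV μ w x ≤ polyPV μ d x :=
  iInf_mono fun i => EReal.sub_le_sub le_rfl
    (EReal.coe_le_coe_iff.2 (mul_le_mul_of_nonneg_left hdw i.cast_nonneg))

theorem polyPV_le_div_mul_polyPV (hμ : IsNegativePV μ) {d w : ℝ} (hd : 0 < d) (hdw : d ≤ w)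
    (x : A[X]) : polyPV μ d x ≤ ((d / w : ℝ) : EReal) * polyPV μ w x := by
  have hw : 0 < w := hd.trans_le hdw
  rcases eq_or_ne x 0 with rfl | hx
  · simp [polyPV_zero_s9 hμ.1.map_zero, EReal.coe_mul_top_of_pos (div_pos hd hw)]
  obtain ⟨j, -, ρ, hρ, hμj, hνx⟩ := exists_polyPV_eq_coe hμ w hx
  have hρ_le : ρ ≤ d / w * ρ := by nlinarith [div_le_one_of_le₀ hdw hw.le]
  calc polyPV μ d x ≤ μ (x.coeff j) - ((j * d : ℝ) : EReal) := polyPV_le μ d x j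
    _ = ((ρ - j * d : ℝ) : EReal) := by rw [hμj, EReal.coe_sub]
    _ ≤ ((d / w * (ρ - j * w) : ℝ) : EReal) := by
      refine EReal.coe_le_coe_iff.2 ?_
      rw [mul_sub, mul_left_comm, div_mul_cancel₀ d hw.ne']
      linarith
    _ = ((d / w : ℝ) : EReal) * polyPV μ w x := by rw [hνx, EReal.coe_mul]

theorem leadingCoeff_mul_coeff_eq_sub (g x : A[X]) (j : ℕ) :
    g.leadingCoeff * x.coeff j = (g * x).coeff (g.natDegree + j) -
      ∑ p ∈ (antidiagonal (g.natDegree + j)).erase (g.natDegree, j),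
        g.coeff p.1 * x.coeff p.2 := by
  have hmem : (g.natDegree, j) ∈ antidiagonal (g.natDegree + j) := mem_antidiagonal.2 rfl
  rw [coeff_mul, ← add_sum_erase _ _ hmem, add_sub_cancel_right]
  rfl

end polyPV

theorem IsPseudovaluation.coe_le_map_leadingCoeff_pow_mul_coeff {A : Type*} [CommRing A]
    {μ : A → EReal} (hμ : IsPseudovaluation μ) {g : A[X]} {M w V : ℝ}
    (hM : ∀ i, (M : EReal) ≤ μ (g.coeff i)) (hw : 0 ≤ w) (n : ℕ) {x : A[X]}
    (hV : ∀ i : ℕ, ((V + i * w : ℝ) : EReal) ≤ μ ((g ^ n * x).coeff i)) (k j : ℕ)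
    (hkj : x.natDegree ≤ k + j) :
    ((k * M + j * w + V : ℝ) : EReal) ≤ μ (g.leadingCoeff ^ (n + k) * x.coeff j) := by
  induction n generalizing x k j with
  | zero =>
    simp only [pow_zero, one_mul, zero_add] at hV ⊢
    exact hμ.coe_le_map_mul (hμ.coe_le_map_pow (hM _) k) (hV j) (by linarith)
  | succ n ih =>
    induction k using Nat.strong_induction_on generalizing j with
    | _ k ihk =>
    rw [show n + 1 + k = n + k + 1 by omega, pow_succ, mul_assoc,
      leadingCoeff_mul_coeff_eq_sub, mul_sub, mul_sum]
    refine hμ.le_map_sub ?_ (hμ.le_map_sum _ _ fun ⟨a, c⟩ hac => ?_)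
    · have hgx := ih (x := g * x) (by simpa only [pow_succ, mul_assoc] using hV) k
        (g.natDegree + j) (natDegree_mul_le.trans (by omega))
      refine (EReal.coe_le_coe_iff.2 ?_).trans hgx
      push_cast
      nlinarith [mul_nonneg (Nat.cast_nonneg g.natDegree : (0 : ℝ) ≤ _) hw]
    obtain ⟨hne, hsum⟩ : (a, c) ≠ (g.natDegree, j) ∧ a + c = g.natDegree + j := by
      simpa using hac
    by_cases hga : g.natDegree < a
    · simp [coeff_eq_zero_of_natDegree_lt hga, hμ.map_zero]
    by_cases hxc : k + j < c
    · simp [coeff_eq_zero_of_natDegree_lt (hkj.trans_lt hxc), hμ.map_zero]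
    obtain ⟨s, rfl⟩ : ∃ s, c = j + s + 1 := ⟨c - j - 1, by grind⟩
    obtain ⟨k', rfl⟩ : ∃ k', k = k' + s + 1 := ⟨k - s - 1, by omega⟩
    rw [show n + (k' + s + 1) = s + (n + 1 + k') by omega, pow_add,
      show ∀ u v y z : A, u * v * (y * z) = y * u * (v * z) by intros; ring]
    refine hμ.coe_le_map_mul (hμ.coe_le_map_mul (hM a) (hμ.coe_le_map_pow (hM _) s) le_rfl)
      (ihk k' (by omega) (j + s + 1) (by omega)) ?_
    push_cast
    nlinarith [mul_nonneg (by positivity : (0 : ℝ) ≤ s + 1) hw]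

theorem eventually_isLocalizing_polyPV {A : Type*} [CommRing A] [IsDomain A] {μ : A → EReal}
    (hμ : IsNegativePV μ) {g : A[X]} (hg : g ≠ 0) (hb : IsLocalizing μ g.leadingCoeff) :
    ∀ᶠ w in atTop, IsLocalizing (polyPV μ w) g := by
  obtain ⟨C₀, D₀, hC₀, hD₀, hb⟩ := hb
  obtain ⟨M, hM⟩ := IsProperPV.exists_coe_le_map_coeff ⟨hμ.1, hμ.2.1⟩ g
  have hC₁ : 0 < min C₀ 1 := lt_min hC₀ one_pos
  filter_upwards [eventually_gt_atTop 0, eventually_ge_atTop (2 * (D₀ - M) / min C₀ 1)]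
    with w hw hwP
  refine ⟨min C₀ 1 / 2, D₀, half_pos hC₁, hD₀, fun n x => ?_⟩
  rcases eq_or_ne x 0 with rfl | hx
  · rw [mul_zero, polyPV_zero_s9 hμ.1.map_zero, EReal.coe_mul_top_of_pos (half_pos hC₁),
      EReal.top_add_coe]
  obtain ⟨j, hj, ρ, hρ, hμj, hνx⟩ := exists_polyPV_eq_coe hμ w hx
  obtain ⟨V, hV⟩ : ∃ V : ℝ, polyPV μ w (g ^ n * x) = V := by
    obtain ⟨_, _, _, _, _, h⟩ := exists_polyPV_eq_coe hμ w (mul_ne_zero (pow_ne_zero n hg) hx)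
    exact ⟨_, h⟩
  obtain ⟨k, hk⟩ : ∃ k, x.natDegree = k + j :=
    ⟨_, (Nat.sub_add_cancel (le_natDegree_of_mem_supp j hj)).symm⟩
  have hlower := hμ.1.coe_le_map_leadingCoeff_pow_mul_coeff hM hw.le n
    (coe_le_polyPV_iff.1 hV.ge) k j hk.le
  have hupper : μ (g.leadingCoeff ^ (n + k) * x.coeff j) ≤
      ((C₀ * ρ + (n + k) * D₀ : ℝ) : EReal) := by
    have := hb (n + k) (x.coeff j)
    rw [hμj] at this
    exact_mod_cast this
  have hdeg : (k : ℝ) * w ≤ -ρ := by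
    have h := polyPV_le_neg_natDegree_mul hμ w hx
    rw [hνx, hk, EReal.coe_le_coe_iff] at h
    push_cast at h
    linarith
  have hkey : k * M + j * w + V ≤ C₀ * ρ + (n + k) * D₀ :=
    EReal.coe_le_coe_iff.1 (hlower.trans hupper)
  rw [hV, hνx, ← EReal.coe_mul, ← EReal.coe_add, EReal.coe_le_coe_iff]
  have h1 : 2 * (D₀ - M) ≤ min C₀ 1 * w := by rwa [div_le_iff₀' hC₁] at hwP
  have h2 : (k : ℝ) * (2 * (D₀ - M)) ≤ k * (min C₀ 1 * w) :=
    mul_le_mul_of_nonneg_left h1 k.cast_nonneg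
  have h3 : min C₀ 1 * (k * w) ≤ min C₀ 1 * -ρ := mul_le_mul_of_nonneg_left hdeg hC₁.le
  have h4 : C₀ * ρ ≤ min C₀ 1 * ρ := mul_le_mul_of_nonpos_right (min_le_left _ _) hρ
  have h5 : min C₀ 1 / 2 * (j * w) ≤ j * w :=
    mul_le_of_le_one_left (by positivity) (by linarith [min_le_right C₀ 1])
  linarith

/-- If every nonzero element of an integral domain `(B, μ)` with a negative
pseudovaluation is localizing, then every nonzero element of `B[T]` is localizing with
respect to `ν(Σ a_i T^i) = min_i { μ(a_i) - i d }`. -/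
theorem statement9 (B : Type*) [CommRing B] [IsDomain B]
    (μ : B → EReal) (hμ : IsNegativePV μ)
    (hloc : ∀ b : B, b ≠ 0 → IsLocalizing μ b)
    (d : ℝ) (hd : 0 < d) :
    ∀ g : Polynomial B, g ≠ 0 → IsLocalizing (polyPV μ d) g := by
  intro g hg
  obtain ⟨w, hw, hdw⟩ := ((eventually_isLocalizing_polyPV hμ hg
    (hloc _ (leadingCoeff_ne_zero.2 hg))).and (eventually_ge_atTop d)).exists
  exact hw.of_le_of_le_mul (div_pos hd (hd.trans_le hdw)) (polyPV_le_polyPV_of_le hdw)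
    (polyPV_le_div_mul_polyPV hμ hd hdw)
end
end
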